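/- Let u, v, w : 𝕋³_ε → ℝ³ be divergence-free vector fields, regular enough that ⟨u·∇v, w⟩ is well defined. Then ⟨u·∇v, M_ε w⟩ = ⟨(M_ε u)·∇(M_ε v), M_ε w⟩ + ⟨(N_ε u)·∇(N_ε v), M_ε w⟩, where the brackets denote the L²(𝕋³_ε) inner product. -/

import Mathlib

open MeasureTheory Real

noncomputable def Mop (ε : ℝ) (f : (Fin 3 → ℝ) → ℝ) (x : Fin 3 → ℝ) : ℝ :=
  (1 / (2 * π * ε)) * ∫ t in (0 : ℝ)..(2 * π * ε), f (Function.update x 2 t)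

def box (ε : ℝ) : Set (Fin 3 → ℝ) :=
  Set.univ.pi fun i => Set.Icc 0 (![2 * π, 2 * π, 2 * π * ε] i)

def IsPeriodic (ε : ℝ) (f : (Fin 3 → ℝ) → ℝ) : Prop :=
  ∀ x : Fin 3 → ℝ, ∀ i : Fin 3, f (x + Pi.single i (![2 * π, 2 * π, 2 * π * ε] i)) = f x

/-- Partial derivative `∂_i`. -/
noncomputable def pd (i : Fin 3) (f : (Fin 3 → ℝ) → ℝ) (x : Fin 3 → ℝ) : ℝ :=
  fderiv ℝ f x (Pi.single i 1)

/-- The advection term `(u·∇)v`. -/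
noncomputable def adv (u v : (Fin 3 → ℝ) → Fin 3 → ℝ) (x : Fin 3 → ℝ) (i : Fin 3) : ℝ :=
  ∑ j : Fin 3, u x j * pd j (fun y => v y i) x

/-- The mean operator acting componentwise on vector fields. -/
noncomputable def MopV (ε : ℝ) (u : (Fin 3 → ℝ) → Fin 3 → ℝ) (x : Fin 3 → ℝ) (i : Fin 3) : ℝ :=
  Mop ε (fun y => u y i) x

/-- The fluctuation operator acting componentwise on vector fields. -/
noncomputable def NopV (ε : ℝ) (u : (Fin 3 → ℝ) → Fin 3 → ℝ) (x : Fin 3 → ℝ) (i : Fin 3) : ℝ :=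
  u x i - MopV ε u x i

def DivFree (u : (Fin 3 → ℝ) → Fin 3 → ℝ) : Prop :=
  ∀ x, (∑ i : Fin 3, pd i (fun y => u y i) x) = 0

def IsPeriodicV (ε : ℝ) (u : (Fin 3 → ℝ) → Fin 3 → ℝ) : Prop :=
  ∀ i : Fin 3, IsPeriodic ε fun y => u y i

namespace Stmt6aux

noncomputable def e2 : Fin 3 → ℝ := Pi.single 2 1

lemma update_eq (x : Fin 3 → ℝ) (t : ℝ) :
    Function.update x 2 t = x + (t - x 2) • e2 := by
  funext i
  by_cases h : i = 2
  · subst h; simp [e2]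
  · simp [Function.update, h, e2, Pi.single_eq_of_ne h]

/-- derivative of `x ↦ Function.update x 2 t`. -/
noncomputable def P : (Fin 3 → ℝ) →L[ℝ] (Fin 3 → ℝ) :=
  ContinuousLinearMap.id ℝ _ - (ContinuousLinearMap.proj 2).smulRight e2

lemma P_apply (h : Fin 3 → ℝ) : P h = h - h 2 • e2 := rfl

lemma P_single {j : Fin 3} (hj : j ≠ 2) : P (Pi.single j 1) = Pi.single j 1 := by
  rw [P_apply]; simp [Pi.single_eq_of_ne (Ne.symm hj)]

lemma P_single2 : P (Pi.single 2 (1:ℝ)) = 0 := by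
  rw [P_apply]; simp [e2]

lemma hasFDerivAt_update {f : (Fin 3 → ℝ) → ℝ} (hf : Differentiable ℝ f) (t : ℝ)
    (x : Fin 3 → ℝ) :
    HasFDerivAt (fun y => f (Function.update y 2 t))
      ((fderiv ℝ f (Function.update x 2 t)).comp P) x := by
  have hL : HasFDerivAt (fun y : Fin 3 → ℝ => Function.update y 2 t) P x := by
    have h1 : HasFDerivAt (fun y : Fin 3 → ℝ => y + (t - y 2) • e2)
        (ContinuousLinearMap.id ℝ (Fin 3 → ℝ) -
          (ContinuousLinearMap.proj 2).smulRight e2) x := by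
      have hid := hasFDerivAt_id (𝕜 := ℝ) x
      have h2 : HasFDerivAt (fun y : Fin 3 → ℝ => (y 2) • e2)
          ((ContinuousLinearMap.proj (R := ℝ) (φ := fun _ : Fin 3 => ℝ) 2).smulRight e2) x :=
        ((ContinuousLinearMap.proj (R := ℝ) (φ := fun _ : Fin 3 => ℝ) 2).smulRight
          e2).hasFDerivAt
      have := (hid.sub h2).add_const (t • e2)
      refine this.congr_of_eventuallyEq (Filter.Eventually.of_forall fun y => ?_)
      simp [sub_smul]; abel
    have : (fun y : Fin 3 → ℝ => Function.update y 2 t)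
        = fun y => y + (t - y 2) • e2 := by
      funext y; exact update_eq y t
    rw [this]; exact h1
  exact ((hf (Function.update x 2 t)).hasFDerivAt).comp x hL



lemma continuous_updatefun {f : (Fin 3 → ℝ) → ℝ} (hf : Continuous f) (x : Fin 3 → ℝ) :
    Continuous (fun t => f (Function.update x 2 t)) := by
  have : Continuous (fun t : ℝ => Function.update x 2 t) := by
    simp only [update_eq]
    exact continuous_const.add (((continuous_id.sub continuous_const).smul continuous_const))
  exact hf.comp this

lemma continuous_fderiv_comp {f : (Fin 3 → ℝ) → ℝ} (hf : ContDiff ℝ (⊤ : ℕ∞) f) (x : Fin 3 → ℝ) :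
    Continuous fun t : ℝ => (fderiv ℝ f (Function.update x 2 t)).comp P := by
  have h1 : Continuous (fderiv ℝ f) := (hf.fderiv_right (m := (⊤ : ℕ∞)) (mod_cast le_top)).continuous
  have h2 : Continuous (fun t : ℝ => Function.update x 2 t) := by
    simp only [update_eq]
    exact continuous_const.add (((continuous_id.sub continuous_const).smul continuous_const))
  exact (((ContinuousLinearMap.compL ℝ (Fin 3 → ℝ) (Fin 3 → ℝ) ℝ).flip P).continuous).comp
    (h1.comp h2)

lemma mop_hasFDerivAt {ε : ℝ} (f : (Fin 3 → ℝ) → ℝ) (hf : ContDiff ℝ (⊤ : ℕ∞) f) (x : Fin 3 → ℝ) :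
    HasFDerivAt (Mop ε f)
      ((1 / (2 * π * ε)) •
        ∫ t in (0 : ℝ)..(2 * π * ε), (fderiv ℝ f (Function.update x 2 t)).comp P) x := by
  set T := 2 * π * ε with hT
  -- bound on the derivative on a compact neighbourhood
  obtain ⟨C, hC⟩ : ∃ C, ∀ y ∈ Metric.closedBall (0 : Fin 3 → ℝ) (‖x‖ + 1 + |T|),
      ‖fderiv ℝ f y‖ ≤ C := by
    exact (isCompact_closedBall _ _).exists_bound_of_continuousOn
      ((hf.fderiv_right (m := (⊤ : ℕ∞)) (mod_cast le_top)).continuous.continuousOn)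
  have key : HasFDerivAt (fun y => ∫ t in (0:ℝ)..T, f (Function.update y 2 t))
      (∫ t in (0:ℝ)..T, (fderiv ℝ f (Function.update x 2 t)).comp P) x := by
    apply intervalIntegral.hasFDerivAt_integral_of_dominated_of_fderiv_le
      (F := fun y t => f (Function.update y 2 t))
      (F' := fun y t => (fderiv ℝ f (Function.update y 2 t)).comp P)
      (bound := fun _ => C * ‖P‖) (s := Metric.ball x 1) (Metric.ball_mem_nhds x one_pos)
    · filter_upwards with y
      exact (continuous_updatefun hf.continuous y).aestronglyMeasurable
    · exact (continuous_updatefun hf.continuous x).intervalIntegrable _ _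
    · exact (continuous_fderiv_comp hf x).aestronglyMeasurable
    · filter_upwards with t ht y hy
      have hmem : Function.update y 2 t ∈
          Metric.closedBall (0 : Fin 3 → ℝ) (‖x‖ + 1 + |T|) := by
        rw [Metric.mem_closedBall, dist_zero_right]
        have hTnn : (0:ℝ) ≤ |T| := abs_nonneg _
        have hxnn : (0:ℝ) ≤ ‖x‖ + 1 + |T| := by positivity
        rw [pi_norm_le_iff_of_nonneg hxnn]
        intro i
        by_cases h : i = 2
        · subst h
          simp only [Function.update_self, Real.norm_eq_abs]
          have ht' : |t| ≤ |T| := by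
            rcases Set.mem_uIoc.mp ht with h | h
            · rw [abs_of_pos h.1]
              exact le_trans h.2 (le_abs_self T)
            · rw [abs_of_nonpos h.2]
              linarith [le_of_lt h.1, neg_le_abs T]
          linarith [norm_nonneg x]
        · rw [Function.update_of_ne h]
          have : ‖y i‖ ≤ ‖y‖ := norm_le_pi_norm y i
          have hy' : ‖y‖ ≤ ‖x‖ + 1 := by
            have := mem_ball_iff_norm.mp hy
            calc ‖y‖ = ‖x + (y - x)‖ := by ring_nf
              _ ≤ ‖x‖ + ‖y - x‖ := norm_add_le _ _
              _ ≤ ‖x‖ + 1 := by linarith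
          linarith [abs_nonneg T]
      calc ‖(fderiv ℝ f (Function.update y 2 t)).comp P‖
          ≤ ‖fderiv ℝ f (Function.update y 2 t)‖ * ‖P‖ :=
            ContinuousLinearMap.opNorm_comp_le _ _
        _ ≤ C * ‖P‖ := by
            apply mul_le_mul_of_nonneg_right (hC _ hmem) (norm_nonneg _)
    · exact intervalIntegrable_const
    · filter_upwards with t ht y hy
      exact hasFDerivAt_update (hf.differentiable (by simp)) t y
  unfold Mop
  exact key.const_mul _



lemma mop_differentiable {ε : ℝ} (f : (Fin 3 → ℝ) → ℝ) (hf : ContDiff ℝ (⊤ : ℕ∞) f) :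
    Differentiable ℝ (Mop ε f) := fun x => (mop_hasFDerivAt f hf x).differentiableAt

lemma mop_continuous {ε : ℝ} (f : (Fin 3 → ℝ) → ℝ) (hf : ContDiff ℝ (⊤ : ℕ∞) f) :
    Continuous (Mop ε f) := (mop_differentiable f hf).continuous

lemma fderiv_mop {ε : ℝ} (f : (Fin 3 → ℝ) → ℝ) (hf : ContDiff ℝ (⊤ : ℕ∞) f) (x : Fin 3 → ℝ) :
    fderiv ℝ (Mop ε f) x = (1 / (2 * π * ε)) •
      ∫ t in (0 : ℝ)..(2 * π * ε), (fderiv ℝ f (Function.update x 2 t)).comp P :=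
  (mop_hasFDerivAt f hf x).fderiv

lemma mop_update {ε : ℝ} (f : (Fin 3 → ℝ) → ℝ) (x : Fin 3 → ℝ) (s : ℝ) :
    Mop ε f (Function.update x 2 s) = Mop ε f x := by
  unfold Mop; congr 1
  apply intervalIntegral.integral_congr
  intro t _
  simp only [Function.update_idem]

lemma fderiv_mop_update {ε : ℝ} (f : (Fin 3 → ℝ) → ℝ) (hf : ContDiff ℝ (⊤ : ℕ∞) f)
    (x : Fin 3 → ℝ) (s : ℝ) :
    fderiv ℝ (Mop ε f) (Function.update x 2 s) = fderiv ℝ (Mop ε f) x := by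
  rw [fderiv_mop f hf, fderiv_mop f hf]
  congr 2
  funext t
  rw [Function.update_idem]

lemma pd_mop_update {ε : ℝ} (f : (Fin 3 → ℝ) → ℝ) (hf : ContDiff ℝ (⊤ : ℕ∞) f)
    (x : Fin 3 → ℝ) (s : ℝ) (j : Fin 3) :
    pd j (Mop ε f) (Function.update x 2 s) = pd j (Mop ε f) x := by
  unfold pd; rw [fderiv_mop_update f hf x s]

lemma continuous_pd (j : Fin 3) (f : (Fin 3 → ℝ) → ℝ) (hf : ContDiff ℝ (⊤ : ℕ∞) f) :
    Continuous (pd j f) := by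
  unfold pd
  exact ((ContinuousLinearMap.apply ℝ ℝ (Pi.single j 1)).continuous).comp
    (hf.fderiv_right (m := (⊤ : ℕ∞)) (mod_cast le_top)).continuous

lemma contDiff_pd (j : Fin 3) (f : (Fin 3 → ℝ) → ℝ) (hf : ContDiff ℝ (⊤ : ℕ∞) f) :
    ContDiff ℝ (⊤ : ℕ∞) (pd j f) := by
  unfold pd
  exact ((ContinuousLinearMap.apply ℝ ℝ (Pi.single j 1)).contDiff).comp
    (hf.fderiv_right (m := (⊤ : ℕ∞)) (mod_cast le_top))

lemma pd_mop_eq {ε : ℝ} (f : (Fin 3 → ℝ) → ℝ) (hf : ContDiff ℝ (⊤ : ℕ∞) f) (x : Fin 3 → ℝ)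
    {j : Fin 3} (hj : j ≠ 2) :
    pd j (Mop ε f) x = Mop ε (pd j f) x := by
  unfold pd
  rw [fderiv_mop f hf, ContinuousLinearMap.smul_apply,
    ContinuousLinearMap.intervalIntegral_apply
      ((continuous_fderiv_comp hf x).intervalIntegrable _ _)]
  unfold Mop
  rw [smul_eq_mul]
  congr 1
  apply intervalIntegral.integral_congr
  intro t _
  simp only [ContinuousLinearMap.comp_apply, P_single hj]

lemma pd_mop_two {ε : ℝ} (f : (Fin 3 → ℝ) → ℝ) (hf : ContDiff ℝ (⊤ : ℕ∞) f) (x : Fin 3 → ℝ) :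
    pd 2 (Mop ε f) x = 0 := by
  unfold pd
  rw [fderiv_mop f hf, ContinuousLinearMap.smul_apply,
    ContinuousLinearMap.intervalIntegral_apply
      ((continuous_fderiv_comp hf x).intervalIntegrable _ _)]
  rw [smul_eq_mul]
  have : ∀ t : ℝ, ((fderiv ℝ f (Function.update x 2 t)).comp P) (Pi.single 2 1) = 0 := by
    intro t
    rw [ContinuousLinearMap.comp_apply, P_single2, map_zero]
  simp only [this, intervalIntegral.integral_zero, mul_zero]

lemma integral_mop_self {ε : ℝ} (hε : 0 < ε) (f : (Fin 3 → ℝ) → ℝ) (x : Fin 3 → ℝ) :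
    ∫ t in (0:ℝ)..(2 * π * ε), f (Function.update x 2 t) = (2 * π * ε) * Mop ε f x := by
  unfold Mop
  have hT : (2 * π * ε) ≠ 0 := by positivity
  field_simp

lemma integral_nop {ε : ℝ} (hε : 0 < ε) (f : (Fin 3 → ℝ) → ℝ) (hf : Continuous f)
    (x : Fin 3 → ℝ) :
    ∫ t in (0:ℝ)..(2 * π * ε),
      (f (Function.update x 2 t) - Mop ε f (Function.update x 2 t)) = 0 := by
  have h1 : ∀ t : ℝ, Mop ε f (Function.update x 2 t) = Mop ε f x := fun t =>
    mop_update f x t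
  have hint1 : IntervalIntegrable (fun t => f (Function.update x 2 t)) volume 0 (2*π*ε) :=
    (continuous_updatefun hf x).intervalIntegrable _ _
  have hint2 : IntervalIntegrable (fun t => Mop ε f (Function.update x 2 t)) volume 0 (2*π*ε) := by
    simp only [h1]; exact intervalIntegrable_const
  rw [intervalIntegral.integral_sub hint1 hint2, integral_mop_self hε]
  simp only [h1]
  rw [intervalIntegral.integral_const]
  simp [smul_eq_mul]

lemma integral_pd_ne {ε : ℝ} (hε : 0 < ε) (f : (Fin 3 → ℝ) → ℝ) (hf : ContDiff ℝ (⊤ : ℕ∞) f)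
    {j : Fin 3} (hj : j ≠ 2) (x : Fin 3 → ℝ) :
    ∫ t in (0:ℝ)..(2 * π * ε), pd j f (Function.update x 2 t)
      = (2 * π * ε) * pd j (Mop ε f) x := by
  rw [pd_mop_eq f hf x hj, integral_mop_self hε]

lemma integral_pd_two {ε : ℝ} (f : (Fin 3 → ℝ) → ℝ) (hf : ContDiff ℝ (⊤ : ℕ∞) f)
    (hper : ∀ y, f (y + Pi.single 2 (2 * π * ε)) = f y) (x : Fin 3 → ℝ) :
    ∫ t in (0:ℝ)..(2 * π * ε), pd 2 f (Function.update x 2 t) = 0 := by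
  have hd : ∀ t ∈ Set.uIcc (0:ℝ) (2 * π * ε),
      HasDerivAt (fun t => f (Function.update x 2 t)) (pd 2 f (Function.update x 2 t)) t := by
    intro t _
    have hL : HasDerivAt (fun t : ℝ => Function.update x 2 t) e2 t := by
      simp only [update_eq]
      have h0 := (((hasDerivAt_id t).sub_const (x 2)).smul_const e2).const_add x
      simpa using h0
    have h2 := ((hf.differentiable (by simp) _).hasFDerivAt).comp_hasDerivAt t hL
    exact h2
  rw [intervalIntegral.integral_eq_sub_of_hasDerivAt hd
    ((continuous_updatefun (continuous_pd 2 f hf) x).intervalIntegrable _ _)]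
  have heq : Function.update x 2 (2 * π * ε) = Function.update x 2 0 + Pi.single 2 (2 * π * ε) := by
    funext i
    by_cases h : i = 2
    · subst h; simp
    · simp [Function.update_of_ne h, Pi.single_eq_of_ne h]
  rw [heq, hper, sub_self]


/-- Insert `t` as third coordinate. -/
def ins (t : ℝ) (y : Fin 2 → ℝ) : Fin 3 → ℝ :=
  Fin.insertNth (α := fun _ : Fin 3 => ℝ) 2 t y

lemma continuous_ins : Continuous fun p : ℝ × (Fin 2 → ℝ) => ins p.1 p.2 := by
  unfold ins
  exact Continuous.finInsertNth 2
    (continuous_fst : Continuous fun p : ℝ × (Fin 2 → ℝ) => p.1) continuous_snd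

lemma ins_eq_update (t : ℝ) (y : Fin 2 → ℝ) :
    ins t y = Function.update (ins 0 y) 2 t := by
  funext i
  by_cases h : i = 2
  · subst h; simp [ins]
  · obtain ⟨j, hj⟩ := Fin.exists_succAbove_eq (Ne.symm (Ne.symm h))
    rw [← hj]
    unfold ins
    rw [Fin.insertNth_apply_succAbove, Function.update_of_ne (Fin.succAbove_ne 2 j),
      Fin.insertNth_apply_succAbove]

lemma box_eq (ε : ℝ) :
    box ε = (MeasurableEquiv.piFinSuccAbove (fun _ : Fin 3 => ℝ) 2) ⁻¹'
      ((Set.Icc (0:ℝ) (2 * π * ε)) ×ˢ (Set.univ.pi fun _ : Fin 2 => Set.Icc (0:ℝ) (2 * π))) := by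
  ext x
  simp only [box, Set.mem_pi, Set.mem_univ, forall_true_left, Set.mem_preimage, Set.mem_prod,
    MeasurableEquiv.piFinSuccAbove_apply, Fin.insertNthEquiv, Equiv.coe_fn_symm_mk]
  constructor
  · intro h
    constructor
    · simpa using h 2
    · intro j
      fin_cases j
      · simpa [Fin.removeNth] using h 0
      · simpa [Fin.removeNth, Fin.succAbove_of_castSucc_lt] using h 1
  · rintro ⟨h2, hq⟩ i
    fin_cases i
    · simpa [Fin.removeNth] using hq 0
    · simpa [Fin.removeNth, Fin.succAbove_of_castSucc_lt] using hq 1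
    · simpa using h2

lemma integral_box_eq_zero {ε : ℝ} (hε : 0 < ε) (g : (Fin 3 → ℝ) → ℝ) (hg : Continuous g)
    (h0 : ∀ x : Fin 3 → ℝ, (∫ t in (0:ℝ)..(2 * π * ε), g (Function.update x 2 t)) = 0) :
    ∫ x in box ε, g x = 0 := by
  set e := MeasurableEquiv.piFinSuccAbove (fun _ : Fin 3 => ℝ) 2 with he
  have hmp := volume_preserving_piFinSuccAbove (fun _ : Fin 3 => ℝ) 2
  have hemb := e.measurableEmbedding
  set S : Set ℝ := Set.Icc 0 (2 * π * ε) with hS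
  set Q : Set (Fin 2 → ℝ) := Set.univ.pi fun _ => Set.Icc 0 (2 * π) with hQ
  have hGcont : Continuous (fun p : ℝ × (Fin 2 → ℝ) => g (ins p.1 p.2)) :=
    hg.comp continuous_ins
  have hint : IntegrableOn (fun p : ℝ × (Fin 2 → ℝ) => g (ins p.1 p.2)) (S ×ˢ Q) := by
    apply hGcont.continuousOn.integrableOn_compact
    exact (isCompact_Icc.prod (isCompact_univ_pi fun _ => isCompact_Icc))
  have step1 : ∫ x in box ε, g x = ∫ p in S ×ˢ Q, g (ins p.1 p.2) := by
    rw [box_eq ε, ← he]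
    rw [← hmp.setIntegral_preimage_emb hemb (fun p : ℝ × (Fin 2 → ℝ) => g (ins p.1 p.2)) _]
    apply setIntegral_congr_fun (e.measurable (by measurability))
    intro x _
    simp only []
    congr 1
    have h1 : ins (e x).1 (e x).2 = e.symm (e x) := by
      rw [MeasurableEquiv.piFinSuccAbove_symm_apply]; rfl
    rw [h1, MeasurableEquiv.symm_apply_apply]
  have step2 : ∫ p in S ×ˢ Q, g (ins p.1 p.2)
      = ∫ t in S, ∫ y in Q, g (ins t y) :=
    setIntegral_prod _ hint
  have step3 : (∫ t in S, ∫ y in Q, g (ins t y))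
      = ∫ y in Q, ∫ t in S, g (ins t y) := by
    apply integral_integral_swap
    rwa [Function.uncurry_def, Measure.prod_restrict]
  have step4 : ∀ y : Fin 2 → ℝ, (∫ t in S, g (ins t y)) = 0 := by
    intro y
    have hle : (0:ℝ) ≤ 2 * π * ε := by positivity
    rw [hS, integral_Icc_eq_integral_Ioc, ← intervalIntegral.integral_of_le hle]
    have : ∀ t : ℝ, g (ins t y) = g (Function.update (ins 0 y) 2 t) := by
      intro t; rw [← ins_eq_update]
    simp only [this]
    exact h0 (ins 0 y)
  rw [step1, step2, step3]
  rw [setIntegral_congr_fun (by measurability) (fun y _ => step4 y)]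
  simp


lemma pd_nop {ε : ℝ} (f : (Fin 3 → ℝ) → ℝ) (hf : ContDiff ℝ (⊤ : ℕ∞) f) (j : Fin 3) (x : Fin 3 → ℝ) :
    pd j (fun y => f y - Mop ε f y) x = pd j f x - pd j (Mop ε f) x := by
  unfold pd
  rw [fderiv_fun_sub (hf.differentiable (by simp) _) ((mop_differentiable f hf) x)]
  simp

lemma continuous_pd_mop {ε : ℝ} (f : (Fin 3 → ℝ) → ℝ) (hf : ContDiff ℝ (⊤ : ℕ∞) f) (j : Fin 3) :
    Continuous (pd j (Mop ε f)) := by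
  by_cases h : j = 2
  · subst h
    have h0 : pd 2 (Mop ε f) = fun _ => (0:ℝ) := funext (pd_mop_two f hf)
    rw [h0]; exact continuous_const
  · have h0 : pd j (Mop ε f) = Mop ε (pd j f) := funext fun x => pd_mop_eq f hf x h
    rw [h0]; exact mop_continuous _ (contDiff_pd j f hf)

lemma adv_decomp (ε : ℝ) (u v : (Fin 3 → ℝ) → Fin 3 → ℝ)
    (hvi : ∀ i, ContDiff ℝ (⊤ : ℕ∞) fun y => v y i) (x : Fin 3 → ℝ) (i : Fin 3) :
    adv u v x i = adv (MopV ε u) (MopV ε v) x i + adv (MopV ε u) (NopV ε v) x i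
      + adv (NopV ε u) (MopV ε v) x i + adv (NopV ε u) (NopV ε v) x i := by
  unfold adv
  rw [← Finset.sum_add_distrib, ← Finset.sum_add_distrib, ← Finset.sum_add_distrib]
  apply Finset.sum_congr rfl
  intro j _
  have e2 : (fun y => MopV ε v y i) = Mop ε (fun y => v y i) := rfl
  have e3' : (fun y => NopV ε v y i)
      = fun y => (fun z => v z i) y - Mop ε (fun z => v z i) y := rfl
  have e3 : pd j (fun y => NopV ε v y i) x
      = pd j (fun y => v y i) x - pd j (Mop ε fun y => v y i) x := by
    rw [e3']; exact pd_nop _ (hvi i) j x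
  have e4 : NopV ε u x j = u x j - Mop ε (fun y => u y j) x := rfl
  have e5 : MopV ε u x j = Mop ε (fun y => u y j) x := rfl
  rw [e2, e3, e4, e5]
  ring

lemma cross_integral_zero {ε : ℝ} (hε : 0 < ε) (u v w : (Fin 3 → ℝ) → Fin 3 → ℝ)
    (hui : ∀ i, ContDiff ℝ (⊤ : ℕ∞) fun y => u y i) (hvi : ∀ i, ContDiff ℝ (⊤ : ℕ∞) fun y => v y i)
    (hwi : ∀ i, ContDiff ℝ (⊤ : ℕ∞) fun y => w y i)
    (hvp : IsPeriodicV ε v) (x : Fin 3 → ℝ) :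
    (∫ t in (0:ℝ)..(2 * π * ε), ∑ i : Fin 3,
        (adv (MopV ε u) (NopV ε v) (Function.update x 2 t) i
          + adv (NopV ε u) (MopV ε v) (Function.update x 2 t) i)
        * MopV ε w (Function.update x 2 t) i) = 0 := by
  have key : ∀ t : ℝ, (∑ i : Fin 3,
        (adv (MopV ε u) (NopV ε v) (Function.update x 2 t) i
          + adv (NopV ε u) (MopV ε v) (Function.update x 2 t) i)
        * MopV ε w (Function.update x 2 t) i)
      = ∑ i : Fin 3, ∑ j : Fin 3,
          (Mop ε (fun y => u y j) x
              * (pd j (fun y => v y i) (Function.update x 2 t)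
                  - pd j (Mop ε fun y => v y i) x)
            + (u (Function.update x 2 t) j - Mop ε (fun y => u y j) x)
              * pd j (Mop ε fun y => v y i) x)
          * Mop ε (fun y => w y i) x := by
    intro t
    apply Finset.sum_congr rfl
    intro i _
    rw [show MopV ε w (Function.update x 2 t) i = Mop ε (fun y => w y i) x from
      mop_update _ x t]
    rw [← Finset.sum_mul]
    congr 1
    unfold adv
    rw [← Finset.sum_add_distrib]
    apply Finset.sum_congr rfl
    intro j _
    have e1 : MopV ε u (Function.update x 2 t) j = Mop ε (fun y => u y j) x :=
      mop_update _ x t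
    have e2 : (fun y => MopV ε v y i) = Mop ε (fun y => v y i) := rfl
    have e3' : (fun y => NopV ε v y i)
        = fun y => (fun z => v z i) y - Mop ε (fun z => v z i) y := rfl
    have e3 : pd j (fun y => NopV ε v y i) (Function.update x 2 t)
        = pd j (fun y => v y i) (Function.update x 2 t)
          - pd j (Mop ε fun y => v y i) (Function.update x 2 t) := by
      rw [e3']; exact pd_nop _ (hvi i) j _
    have e4 : NopV ε u (Function.update x 2 t) j
        = u (Function.update x 2 t) j - Mop ε (fun y => u y j) x := by
      show u (Function.update x 2 t) j - MopV ε u (Function.update x 2 t) j = _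
      rw [e1]
    rw [e1, e2, e3, e4, pd_mop_update _ (hvi i)]
  rw [intervalIntegral.integral_congr (fun t _ => key t)]
  have contpd : ∀ i j : Fin 3, Continuous fun t => pd j (fun y => v y i) (Function.update x 2 t) :=
    fun i j => continuous_updatefun (continuous_pd j _ (hvi i)) x
  have contu : ∀ j : Fin 3, Continuous fun t => u (Function.update x 2 t) j :=
    fun j => continuous_updatefun (hui j).continuous x
  have contterm : ∀ i j : Fin 3, Continuous fun t =>
      (Mop ε (fun y => u y j) x
          * (pd j (fun y => v y i) (Function.update x 2 t)
              - pd j (Mop ε fun y => v y i) x)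
        + (u (Function.update x 2 t) j - Mop ε (fun y => u y j) x)
          * pd j (Mop ε fun y => v y i) x)
      * Mop ε (fun y => w y i) x := by
    intro i j
    exact (((continuous_const.mul ((contpd i j).sub continuous_const)).add
      (((contu j).sub continuous_const).mul continuous_const)).mul continuous_const)
  rw [intervalIntegral.integral_finset_sum
    (fun i _ => (continuous_finset_sum _ fun j _ => contterm i j).intervalIntegrable _ _)]
  apply Finset.sum_eq_zero
  intro i _
  rw [intervalIntegral.integral_finset_sum (fun j _ => (contterm i j).intervalIntegrable _ _)]
  apply Finset.sum_eq_zero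
  intro j _
  have hrw : (fun t =>
      (Mop ε (fun y => u y j) x
          * (pd j (fun y => v y i) (Function.update x 2 t)
              - pd j (Mop ε fun y => v y i) x)
        + (u (Function.update x 2 t) j - Mop ε (fun y => u y j) x)
          * pd j (Mop ε fun y => v y i) x)
      * Mop ε (fun y => w y i) x)
      = fun t => (Mop ε (fun y => u y j) x * Mop ε (fun y => w y i) x)
          * (pd j (fun y => v y i) (Function.update x 2 t)
              - pd j (Mop ε fun y => v y i) x)
        + (pd j (Mop ε fun y => v y i) x * Mop ε (fun y => w y i) x)
          * (u (Function.update x 2 t) j - Mop ε (fun y => u y j) x) := by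
    funext t; ring
  rw [hrw]
  rw [intervalIntegral.integral_add
    ((continuous_const.fun_mul ((contpd i j).fun_sub continuous_const)).intervalIntegrable _ _)
    ((continuous_const.fun_mul ((contu j).fun_sub continuous_const)).intervalIntegrable _ _),
    intervalIntegral.integral_const_mul, intervalIntegral.integral_const_mul]
  have hz1 : (∫ t in (0:ℝ)..(2 * π * ε),
      (pd j (fun y => v y i) (Function.update x 2 t)
        - pd j (Mop ε fun y => v y i) x)) = 0 := by
    rw [intervalIntegral.integral_sub ((contpd i j).intervalIntegrable _ _)
      intervalIntegrable_const, intervalIntegral.integral_const]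
    by_cases hj : j = 2
    · subst hj
      have hper : ∀ y, (fun z => v z i) (y + Pi.single 2 (2 * π * ε)) = (fun z => v z i) y := by
        intro y
        have h := hvp i y 2
        simpa using h
      rw [integral_pd_two _ (hvi i) hper x, pd_mop_two _ (hvi i)]
      simp
    · rw [integral_pd_ne hε _ (hvi i) hj x]
      simp [smul_eq_mul]
  have hz2 : (∫ t in (0:ℝ)..(2 * π * ε),
      (u (Function.update x 2 t) j - Mop ε (fun y => u y j) x)) = 0 := by
    have heq : ∀ t : ℝ, u (Function.update x 2 t) j - Mop ε (fun y => u y j) x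
        = (fun y => u y j) (Function.update x 2 t)
          - Mop ε (fun y => u y j) (Function.update x 2 t) := by
      intro t; rw [mop_update]
    simp only [heq]
    exact integral_nop hε _ (hui j).continuous x
  rw [hz1, hz2]
  ring

end Stmt6aux



/-- For divergence-free `u, v, w` on the thin torus:
`⟨u·∇v, M_ε w⟩ = ⟨(M_ε u)·∇(M_ε v), M_ε w⟩ + ⟨(N_ε u)·∇(N_ε v), M_ε w⟩`. -/
theorem stmt_6 (ε : ℝ) (hε : 0 < ε) (u v w : (Fin 3 → ℝ) → Fin 3 → ℝ)
    (hu : ContDiff ℝ (⊤ : ℕ∞) u) (hv : ContDiff ℝ (⊤ : ℕ∞) v) (hw : ContDiff ℝ (⊤ : ℕ∞) w)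
    (hup : IsPeriodicV ε u) (hvp : IsPeriodicV ε v) (hwp : IsPeriodicV ε w)
    (hud : DivFree u) (hvd : DivFree v) (hwd : DivFree w) :
    (∫ x in box ε, ∑ i : Fin 3, adv u v x i * MopV ε w x i) =
      (∫ x in box ε, ∑ i : Fin 3, adv (MopV ε u) (MopV ε v) x i * MopV ε w x i) +
        ∫ x in box ε, ∑ i : Fin 3, adv (NopV ε u) (NopV ε v) x i * MopV ε w x i := by
  classical
  open Stmt6aux in
  have hui : ∀ i, ContDiff ℝ (⊤ : ℕ∞) fun y => u y i := fun i =>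
    (ContinuousLinearMap.proj (R := ℝ) (φ := fun _ : Fin 3 => ℝ) i).contDiff.comp hu
  have hvi : ∀ i, ContDiff ℝ (⊤ : ℕ∞) fun y => v y i := fun i =>
    (ContinuousLinearMap.proj (R := ℝ) (φ := fun _ : Fin 3 => ℝ) i).contDiff.comp hv
  have hwi : ∀ i, ContDiff ℝ (⊤ : ℕ∞) fun y => w y i := fun i =>
    (ContinuousLinearMap.proj (R := ℝ) (φ := fun _ : Fin 3 => ℝ) i).contDiff.comp hw
  have hMw : ∀ i, Continuous fun x => MopV ε w x i := fun i =>
    Stmt6aux.mop_continuous _ (hwi i)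
  have hMu : ∀ j, Continuous fun x => MopV ε u x j := fun j =>
    Stmt6aux.mop_continuous _ (hui j)
  have hNu : ∀ j, Continuous fun x => NopV ε u x j := fun j => by
    have : (fun x => NopV ε u x j) = fun x => u x j - Mop ε (fun y => u y j) x := rfl
    rw [this]
    exact (hui j).continuous.sub (Stmt6aux.mop_continuous _ (hui j))
  have hpdM : ∀ i j : Fin 3, Continuous fun x => pd j (fun y => MopV ε v y i) x := by
    intro i j
    have e2 : (fun y => MopV ε v y i) = Mop ε (fun y => v y i) := rfl
    rw [e2]
    exact Stmt6aux.continuous_pd_mop _ (hvi i) j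
  have hpdN : ∀ i j : Fin 3, Continuous fun x => pd j (fun y => NopV ε v y i) x := by
    intro i j
    have e3 : (fun x => pd j (fun y => NopV ε v y i) x)
        = fun x => pd j (fun y => v y i) x - pd j (Mop ε fun y => v y i) x := by
      funext x
      have e3' : (fun y => NopV ε v y i)
          = fun y => (fun z => v z i) y - Mop ε (fun z => v z i) y := rfl
      rw [e3']
      exact Stmt6aux.pd_nop _ (hvi i) j x
    rw [e3]
    exact (Stmt6aux.continuous_pd j _ (hvi i)).sub (Stmt6aux.continuous_pd_mop _ (hvi i) j)
  have hcontA : Continuous fun x => ∑ i : Fin 3,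
      adv (MopV ε u) (MopV ε v) x i * MopV ε w x i := by
    apply continuous_finset_sum
    intro i _
    refine Continuous.mul ?_ (hMw i)
    unfold adv
    apply continuous_finset_sum
    intro j _
    exact (hMu j).mul (hpdM i j)
  have hcontD : Continuous fun x => ∑ i : Fin 3,
      adv (NopV ε u) (NopV ε v) x i * MopV ε w x i := by
    apply continuous_finset_sum
    intro i _
    refine Continuous.mul ?_ (hMw i)
    unfold adv
    apply continuous_finset_sum
    intro j _
    exact (hNu j).mul (hpdN i j)
  have hcontG : Continuous fun x => ∑ i : Fin 3,
      (adv (MopV ε u) (NopV ε v) x i + adv (NopV ε u) (MopV ε v) x i) * MopV ε w x i := by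
    apply continuous_finset_sum
    intro i _
    refine Continuous.mul ?_ (hMw i)
    apply Continuous.add
    · unfold adv
      apply continuous_finset_sum
      intro j _
      exact (hMu j).mul (hpdN i j)
    · unfold adv
      apply continuous_finset_sum
      intro j _
      exact (hNu j).mul (hpdM i j)
  have hdecomp : ∀ x : Fin 3 → ℝ, (∑ i : Fin 3, adv u v x i * MopV ε w x i)
      = (∑ i : Fin 3, adv (MopV ε u) (MopV ε v) x i * MopV ε w x i)
        + ((∑ i : Fin 3, adv (NopV ε u) (NopV ε v) x i * MopV ε w x i)
          + (∑ i : Fin 3,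
              (adv (MopV ε u) (NopV ε v) x i + adv (NopV ε u) (MopV ε v) x i)
              * MopV ε w x i)) := by
    intro x
    rw [← Finset.sum_add_distrib, ← Finset.sum_add_distrib]
    apply Finset.sum_congr rfl
    intro i _
    rw [Stmt6aux.adv_decomp ε u v hvi x i]
    ring
  have hbox_cpt : IsCompact (box ε) := isCompact_univ_pi fun i => isCompact_Icc
  have hintA : IntegrableOn (fun x => ∑ i : Fin 3,
      adv (MopV ε u) (MopV ε v) x i * MopV ε w x i) (box ε) :=
    hcontA.continuousOn.integrableOn_compact hbox_cpt
  have hintD : IntegrableOn (fun x => ∑ i : Fin 3,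
      adv (NopV ε u) (NopV ε v) x i * MopV ε w x i) (box ε) :=
    hcontD.continuousOn.integrableOn_compact hbox_cpt
  have hintG : IntegrableOn (fun x => ∑ i : Fin 3,
      (adv (MopV ε u) (NopV ε v) x i + adv (NopV ε u) (MopV ε v) x i) * MopV ε w x i)
      (box ε) :=
    hcontG.continuousOn.integrableOn_compact hbox_cpt
  have hGzero : (∫ x in box ε, ∑ i : Fin 3,
      (adv (MopV ε u) (NopV ε v) x i + adv (NopV ε u) (MopV ε v) x i) * MopV ε w x i) = 0 := by
    apply Stmt6aux.integral_box_eq_zero hε _ hcontG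
    intro x
    exact Stmt6aux.cross_integral_zero hε u v w hui hvi hwi hvp x
  have hDG : IntegrableOn (fun x =>
      (∑ i : Fin 3, adv (NopV ε u) (NopV ε v) x i * MopV ε w x i)
        + ∑ i : Fin 3,
            (adv (MopV ε u) (NopV ε v) x i + adv (NopV ε u) (MopV ε v) x i)
            * MopV ε w x i) (box ε) := hintD.add hintG
  simp only [hdecomp]
  rw [integral_add hintA hDG, integral_add hintD hintG, hGzero, add_zero]
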